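/- arXiv:2209.01991 — 2 statements merged into one kernel-verified Lean document; each statement's English description precedes it below -/
import Mathlib

section
/- For a strictly positive n×n matrix A: (1/n)·∑ᵢ∑ⱼ a_{i,j} = max over B ∈ Ω(A) of ρ(B) if and only if (1/n)·∑ᵢ∑ⱼ a_{i,j} = min over B ∈ Ω(A) of ρ(B). -/
/-!
Let `r` be the vector of row sums of `A`; it is also the vector of row sums of every
`B ∈ Ω(A)`. Put `m = (∑ a_ij) / n`. For a fixed row permutation, the average of `(B r)_i` over
its `n` cyclic shifts is `m r_i`. So either `B r = m r` for every `B ∈ Ω(A)`, and then every Perron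
root is `m`; or, row by row, some permutation makes `(B r)_i ≥ m r_i`, with strict inequality in
one row, and another makes `(B r)_i ≤ m r_i`, again strict in one row. For a positive `B`,
`m r ≤ B r` with `m r ≠ B r` forces `ρ(B) > m` (and dually `ρ(B) < m`), so the maximum lies
above `m` and the minimum below it.

The lower Collatz–Wielandt bound `t w ≤ B w ⇒ t ≤ ρ(B)` requires an actual eigenvector. It comes
from Wielandt's argument: maximize `s` over the compact set of pairs `(s, v)` with `v` in the
standard simplex and `s v ≤ B v`.
-/

open Matrix Finset

/-- The Perron root: the largest nonnegative real eigenvalue of a matrix. -/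
noncomputable def perronRoot {n : ℕ} (A : Matrix (Fin n) (Fin n) ℝ) : ℝ :=
  sSup {r : ℝ | 0 ≤ r ∧ ∃ v : Fin n → ℝ, v ≠ 0 ∧ A.mulVec v = r • v}

/-- Ω(A): matrices obtained by permuting the entries within each row of A independently. -/
def Omega {n : ℕ} (A : Matrix (Fin n) (Fin n) ℝ) : Set (Matrix (Fin n) (Fin n) ℝ) :=
  {B | ∀ i, ∃ φ : Equiv.Perm (Fin n), ∀ j, B i j = A i (φ j)}

/-- Irreducibility: the directed graph of the matrix is strongly connected. -/
def Irred {n : ℕ} (A : Matrix (Fin n) (Fin n) ℝ) : Prop :=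
  ∀ i j, ∃ m : ℕ, 0 < m ∧ 0 < (A ^ m) i j

theorem exists_gt_smul_le {ι : Type*} [Finite ι] {a b : ι → ℝ} {t : ℝ}
    (h : ∀ i, t * a i < b i) : ∃ s > t, s • a ≤ b := by
  have : ∀ᶠ s in nhds t, ∀ i, s * a i < b i := Filter.eventually_all.2 fun i =>
    (continuous_id.mul continuous_const).continuousAt.eventually_lt continuousAt_const (h i)
  obtain ⟨s, hts, hs⟩ := this.exists_gt
  exact ⟨s, hts, fun i => (hs i).le⟩

theorem exists_lt_le_smul {ι : Type*} [Finite ι] {a b : ι → ℝ} {t : ℝ}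
    (h : ∀ i, b i < t * a i) : ∃ s < t, b ≤ s • a := by
  have : ∀ᶠ s in nhds t, ∀ i, b i < s * a i := Filter.eventually_all.2 fun i =>
    continuousAt_const.eventually_lt (continuous_id.mul continuous_const).continuousAt (h i)
  obtain ⟨s, hst, hs⟩ := this.exists_lt
  exact ⟨s, hst, fun i => (hs i).le⟩

namespace Matrix

variable {ι : Type*} [Fintype ι] {B : Matrix ι ι ℝ}

theorem mulVec_mono_of_nonneg (hB : ∀ i j, 0 ≤ B i j) {u v : ι → ℝ} (huv : u ≤ v) :
    B *ᵥ u ≤ B *ᵥ v :=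
  fun i => dotProduct_le_dotProduct_of_nonneg_left huv (hB i)

theorem mulVec_one_le_sum_smul (hB : ∀ i j, 0 ≤ B i j) :
    B *ᵥ 1 ≤ (∑ i, ∑ j, B i j) • 1 := fun i => by
  simpa [mulVec, dotProduct] using
    single_le_sum (f := fun i => ∑ j, B i j) (fun i _ => sum_nonneg fun j _ => hB i j) (mem_univ i)

theorem mulVec_pos (hB : ∀ i j, 0 < B i j) {v : ι → ℝ} (hv : 0 ≤ v) (hv0 : v ≠ 0) (i : ι) :
    0 < (B *ᵥ v) i := by
  obtain ⟨j, hj⟩ := Function.ne_iff.1 hv0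
  exact sum_pos' (fun k _ => mul_nonneg (hB i k).le (hv k))
    ⟨j, mem_univ j, mul_pos (hB i j) ((hv j).lt_of_ne' hj)⟩

theorem mulVec_lt_mulVec (hB : ∀ i j, 0 < B i j) {u v : ι → ℝ} (huv : u ≤ v) (hne : u ≠ v)
    (i : ι) : (B *ᵥ u) i < (B *ᵥ v) i := by
  have := mulVec_pos hB (sub_nonneg.2 huv) (sub_ne_zero.2 hne.symm) i
  rwa [mulVec_sub, Pi.sub_apply, sub_pos] at this

theorem abs_eigenvalue_le_of_mulVec_le (hB : ∀ i j, 0 ≤ B i j) {v : ι → ℝ}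
    (hv : ∀ i, 0 < v i) {t : ℝ} (hBv : B *ᵥ v ≤ t • v) {x : ℝ} {u : ι → ℝ} (hu : u ≠ 0)
    (hux : B *ᵥ u = x • u) : |x| ≤ t := by
  obtain ⟨j, hj⟩ := Function.ne_iff.1 hu
  have : Nonempty ι := ⟨j⟩
  obtain ⟨i, hi⟩ := Finite.exists_max fun i => |u i| / v i
  set c := |u i| / v i
  have hc : 0 < c := (div_pos (abs_pos.2 hj) (hv j)).trans_le (hi j)
  have hui : 0 < |u i| := by simpa [c, hv i] using hc
  have hu_le : (fun j => |u j|) ≤ c • v := fun j => by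
    simpa [c, div_le_iff₀ (hv j)] using hi j
  refine le_of_mul_le_mul_right ?_ hui
  calc |x| * |u i| = |(B *ᵥ u) i| := by rw [hux, Pi.smul_apply, smul_eq_mul, abs_mul]
    _ ≤ (B *ᵥ fun j => |u j|) i := by
        refine (abs_sum_le_sum_abs _ _).trans_eq (sum_congr rfl fun j _ => ?_)
        rw [abs_mul, abs_of_nonneg (hB i j)]
    _ ≤ (B *ᵥ (c • v)) i := mulVec_mono_of_nonneg hB hu_le i
    _ = c * (B *ᵥ v) i := by rw [mulVec_smul, Pi.smul_apply, smul_eq_mul]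
    _ ≤ c * (t * v i) := mul_le_mul_of_nonneg_left (hBv i) hc.le
    _ = t * |u i| := by rw [mul_left_comm, div_mul_cancel₀ _ (hv i).ne']

theorem mulVec_ne_zero (hB : ∀ i j, 0 < B i j) {v : ι → ℝ} (hv : 0 ≤ v) (hv0 : v ≠ 0) :
    B *ᵥ v ≠ 0 := by
  obtain ⟨j, -⟩ := Function.ne_iff.1 hv0
  exact fun h => (mulVec_pos hB hv hv0 j).ne' (congrFun h j)

theorem inv_sum_smul_mem_stdSimplex {v : ι → ℝ} (hv : 0 ≤ v) (hv0 : v ≠ 0) :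
    (∑ i, v i)⁻¹ • v ∈ stdSimplex ℝ ι := by
  obtain ⟨j, hj⟩ := Function.ne_iff.1 hv0
  have hsum : 0 < ∑ i, v i := sum_pos' (fun i _ => hv i) ⟨j, mem_univ j, (hv j).lt_of_ne' hj⟩
  refine ⟨fun i => mul_nonneg (inv_nonneg.2 hsum.le) (hv i), ?_⟩
  simp only [Pi.smul_apply, smul_eq_mul, ← mul_sum, inv_mul_cancel₀ hsum.ne']

theorem le_sum_of_smul_le_mulVec (hB : ∀ i j, 0 ≤ B i j) {v : ι → ℝ}
    (hv : v ∈ stdSimplex ℝ ι) {s : ℝ} (h : s • v ≤ B *ᵥ v) : s ≤ ∑ i, ∑ j, B i j :=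
  calc s = ∑ i, s * v i := by rw [← mul_sum, hv.2, mul_one]
    _ ≤ ∑ i, (B *ᵥ v) i := sum_le_sum fun i _ => h i
    _ ≤ ∑ i, (B *ᵥ 1) i :=
        sum_le_sum fun i _ => mulVec_mono_of_nonneg hB (stdSimplex_subset_Icc ℝ hv).2 i
    _ = ∑ i, ∑ j, B i j := by simp [mulVec, dotProduct]

theorem exists_eigenvalue_ge (hB : ∀ i j, 0 < B i j) {w : ι → ℝ} (hw : 0 ≤ w) (hw0 : w ≠ 0)
    {t : ℝ} (h : t • w ≤ B *ᵥ w) : ∃ r ≥ t, ∃ u ≠ 0, B *ᵥ u = r • u := by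
  set Q : Set (ℝ × (ι → ℝ)) := {p | t ≤ p.1 ∧ p.2 ∈ stdSimplex ℝ ι ∧ p.1 • p.2 ≤ B *ᵥ p.2}
  have mem_Q {s : ℝ} {v : ι → ℝ} (hts : t ≤ s) (hv : 0 ≤ v) (hv0 : v ≠ 0)
      (hsv : s • v ≤ B *ᵥ v) : (s, (∑ i, v i)⁻¹ • v) ∈ Q := by
    refine ⟨hts, inv_sum_smul_mem_stdSimplex hv hv0, ?_⟩
    rw [mulVec_smul, smul_comm]
    exact smul_le_smul_of_nonneg_left hsv (inv_nonneg.2 (sum_nonneg fun i _ => hv i))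
  have hQ : IsCompact Q := by
    refine ((isCompact_Icc (a := t) (b := ∑ i, ∑ j, B i j)).prod
      (isCompact_stdSimplex ℝ ι)).of_isClosed_subset ?_ ?_
    · exact (isClosed_le continuous_const continuous_fst).inter
        (((isClosed_stdSimplex ℝ ι).preimage continuous_snd).inter
          (isClosed_le (continuous_fst.smul continuous_snd)
            (continuous_const.matrix_mulVec continuous_snd)))
    · exact fun p hp => ⟨⟨hp.1, le_sum_of_smul_le_mulVec (fun i j => (hB i j).le) hp.2.1 hp.2.2⟩,
        hp.2.1⟩
  obtain ⟨⟨r, v⟩, ⟨htr, hv, hrv⟩, hmax⟩ :=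
    hQ.exists_isMaxOn ⟨_, mem_Q le_rfl hw hw0 h⟩ continuous_fst.continuousOn
  have hv0 : v ≠ 0 := fun h0 => by simpa [h0] using hv.2
  refine ⟨r, htr, v, hv0, ?_⟩
  by_contra hne
  -- `r • v ≤ B v` is strict in some entry, so `r • B v < B (B v)` in every entry and `r` can
  -- be increased: this contradicts the maximality of `r`.
  have hlt : ∀ i, r * (B *ᵥ v) i < (B *ᵥ (B *ᵥ v)) i := fun i => by
    simpa [mulVec_smul] using mulVec_lt_mulVec hB hrv (Ne.symm hne) i
  obtain ⟨s, hrs, hs⟩ := exists_gt_smul_le hlt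
  have hmem := mem_Q (htr.trans hrs.le) (fun i => (mulVec_pos hB hv.1 hv0 i).le)
    (mulVec_ne_zero hB hv.1 hv0) hs
  exact (hmax hmem).not_gt hrs

end Matrix

section PerronRoot

variable {n : ℕ} {B : Matrix (Fin n) (Fin n) ℝ}

theorem perronRoot_nonneg (B : Matrix (Fin n) (Fin n) ℝ) : 0 ≤ perronRoot B :=
  Real.sSup_nonneg fun _ hr => hr.1

theorem bddBelow_perronRoot_image (S : Set (Matrix (Fin n) (Fin n) ℝ)) :
    BddBelow (perronRoot '' S) :=
  ⟨0, by
    rintro _ ⟨B, -, rfl⟩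
    exact perronRoot_nonneg B⟩

theorem perronRoot_le_of_mulVec_le [NeZero n] (hB : ∀ i j, 0 ≤ B i j) {v : Fin n → ℝ}
    (hv : ∀ i, 0 < v i) {t : ℝ} (h : B *ᵥ v ≤ t • v) : perronRoot B ≤ t := by
  have ht : 0 ≤ t := nonneg_of_mul_nonneg_left
    ((dotProduct_nonneg_of_nonneg (hB 0) fun i => (hv i).le).trans (h 0)) (hv 0)
  exact Real.sSup_le (fun x ⟨_, u, hu, hux⟩ => (le_abs_self x).trans
    (abs_eigenvalue_le_of_mulVec_le hB hv h hu hux)) ht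

theorem le_perronRoot_of_le_mulVec (hB : ∀ i j, 0 < B i j) {w : Fin n → ℝ} (hw : 0 ≤ w)
    (hw0 : w ≠ 0) {t : ℝ} (h : t • w ≤ B *ᵥ w) : t ≤ perronRoot B := by
  obtain ⟨r, htr, u, hu, hur⟩ := exists_eigenvalue_ge hB hw hw0 h
  rcases le_total t 0 with ht | ht
  · exact ht.trans (perronRoot_nonneg B)
  have hbdd : BddAbove {r : ℝ | 0 ≤ r ∧ ∃ v : Fin n → ℝ, v ≠ 0 ∧ B *ᵥ v = r • v} :=
    ⟨∑ i, ∑ j, B i j, fun x ⟨_, u, hu, hux⟩ => (le_abs_self x).trans <|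
      abs_eigenvalue_le_of_mulVec_le (fun i j => (hB i j).le) (fun _ => one_pos)
        (mulVec_one_le_sum_smul fun i j => (hB i j).le) hu hux⟩
  exact htr.trans (le_csSup hbdd ⟨ht.trans htr, u, hu, hur⟩)

theorem perronRoot_eq_of_mulVec_eq [NeZero n] (hB : ∀ i j, 0 < B i j) {v : Fin n → ℝ}
    (hv : ∀ i, 0 < v i) {t : ℝ} (h : B *ᵥ v = t • v) : perronRoot B = t :=
  le_antisymm (perronRoot_le_of_mulVec_le (fun i j => (hB i j).le) hv h.le)
    (le_perronRoot_of_le_mulVec hB (fun i => (hv i).le) (fun h0 => (hv 0).ne' (congrFun h0 0))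
      h.ge)

theorem lt_perronRoot_of_le_mulVec (hB : ∀ i j, 0 < B i j) {v : Fin n → ℝ} (hv : 0 ≤ v)
    (hv0 : v ≠ 0) {t : ℝ} (h : t • v ≤ B *ᵥ v) (hne : t • v ≠ B *ᵥ v) : t < perronRoot B := by
  have hlt : ∀ i, t * (B *ᵥ v) i < (B *ᵥ (B *ᵥ v)) i := fun i => by
    simpa [mulVec_smul] using mulVec_lt_mulVec hB h hne i
  obtain ⟨s, hts, hs⟩ := exists_gt_smul_le hlt
  exact hts.trans_le <| le_perronRoot_of_le_mulVec hB (fun i => (mulVec_pos hB hv hv0 i).le)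
    (mulVec_ne_zero hB hv hv0) hs

theorem perronRoot_lt_of_mulVec_le [NeZero n] (hB : ∀ i j, 0 < B i j) {v : Fin n → ℝ}
    (hv : 0 ≤ v) (hv0 : v ≠ 0) {t : ℝ} (h : B *ᵥ v ≤ t • v) (hne : B *ᵥ v ≠ t • v) :
    perronRoot B < t := by
  have hlt : ∀ i, (B *ᵥ (B *ᵥ v)) i < t * (B *ᵥ v) i := fun i => by
    simpa [mulVec_smul] using mulVec_lt_mulVec hB h hne i
  obtain ⟨s, hst, hs⟩ := exists_lt_le_smul hlt
  exact (perronRoot_le_of_mulVec_le (fun i j => (hB i j).le) (mulVec_pos hB hv hv0) hs).trans_lt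
    hst

end PerronRoot

section Omega

variable {n : ℕ}

theorem sum_dotProduct_comp_addRight [NeZero n] (a w : Fin n → ℝ) (ψ : Equiv.Perm (Fin n)) :
    ∑ c, (a ∘ ψ ∘ Equiv.addRight c) ⬝ᵥ w = (∑ j, a j) * ∑ j, w j := by
  have hrow (j : Fin n) : ∑ c, a (ψ (j + c)) = ∑ k, a k :=
    (Fintype.sum_equiv (Equiv.addLeft j) _ _ fun _ => rfl).trans (Equiv.sum_comp ψ a)
  simp only [dotProduct, Function.comp_apply, Equiv.coe_addRight]
  rw [sum_comm, mul_sum]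
  exact sum_congr rfl fun j _ => by rw [← sum_mul, hrow]

theorem exists_perm_le_dotProduct_comp [NeZero n] (a w : Fin n → ℝ) (ψ : Equiv.Perm (Fin n)) :
    ∃ φ : Equiv.Perm (Fin n), a ⬝ᵥ (fun _ => (∑ j, w j) / n) ≤ (a ∘ φ) ⬝ᵥ w ∧
      ((a ∘ ψ) ⬝ᵥ w ≠ a ⬝ᵥ (fun _ => (∑ j, w j) / n) →
        a ⬝ᵥ (fun _ => (∑ j, w j) / n) < (a ∘ φ) ⬝ᵥ w) := by
  set μ := a ⬝ᵥ fun _ => (∑ j, w j) / n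
  by_cases hψ : (a ∘ ψ) ⬝ᵥ w = μ
  · exact ⟨ψ, hψ.ge, fun h => absurd hψ h⟩
  have hsum : ∑ c, ((a ∘ ψ ∘ Equiv.addRight c) ⬝ᵥ w - μ) = 0 := by
    rw [sum_sub_distrib, sum_dotProduct_comp_addRight, sum_const, card_univ, Fintype.card_fin,
      nsmul_eq_mul, sub_eq_zero]
    have hn : (n : ℝ) ≠ 0 := Nat.cast_ne_zero.2 (NeZero.ne n)
    simp only [μ, dotProduct, ← sum_mul]
    field_simp
  obtain ⟨c, -, hc⟩ := exists_pos_of_sum_zero_of_exists_nonzero _ hsum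
    ⟨0, mem_univ 0, by simpa [sub_eq_zero] using hψ⟩
  exact ⟨(Equiv.addRight c).trans ψ, (sub_pos.1 hc).le, fun _ => sub_pos.1 hc⟩

theorem self_mem_Omega (A : Matrix (Fin n) (Fin n) ℝ) : A ∈ Omega A :=
  fun _ => ⟨Equiv.refl _, fun _ => rfl⟩

theorem neg_mem_Omega_neg {A B : Matrix (Fin n) (Fin n) ℝ} (hB : B ∈ Omega A) :
    -B ∈ Omega (-A) :=
  fun i => (hB i).imp fun _ hφ j => by simp [hφ j]

theorem forall_entries_of_mem_Omega {p : ℝ → Prop} {A B : Matrix (Fin n) (Fin n) ℝ}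
    (hA : ∀ i j, p (A i j)) (hB : B ∈ Omega A) (i j : Fin n) : p (B i j) := by
  obtain ⟨φ, hφ⟩ := hB i
  exact hφ j ▸ hA i (φ j)

theorem mulVec_one_of_mem_Omega {A B : Matrix (Fin n) (Fin n) ℝ} (hB : B ∈ Omega A) :
    B *ᵥ 1 = A *ᵥ 1 := funext fun i => by
  obtain ⟨φ, hφ⟩ := hB i
  simpa [mulVec, dotProduct, hφ] using Equiv.sum_comp φ (A i)

theorem bddAbove_perronRoot_image_Omega [NeZero n] {A : Matrix (Fin n) (Fin n) ℝ}
    (hA : ∀ i j, 0 ≤ A i j) : BddAbove (perronRoot '' Omega A) := by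
  refine ⟨∑ i, ∑ j, A i j, ?_⟩
  rintro _ ⟨B, hB, rfl⟩
  exact perronRoot_le_of_mulVec_le (forall_entries_of_mem_Omega hA hB) (fun _ => one_pos)
    ((mulVec_one_of_mem_Omega hB).trans_le (mulVec_one_le_sum_smul hA))

theorem perronRoot_image_Omega_eq_singleton [NeZero n] {A : Matrix (Fin n) (Fin n) ℝ}
    (hA : ∀ i j, 0 < A i j) {v : Fin n → ℝ} (hv : ∀ i, 0 < v i) {t : ℝ}
    (h : ∀ B ∈ Omega A, B *ᵥ v = t • v) : perronRoot '' Omega A = {t} := by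
  refine Set.eq_singleton_iff_unique_mem.2 ⟨⟨A, self_mem_Omega A, ?_⟩, ?_⟩
  · exact perronRoot_eq_of_mulVec_eq hA hv (h A (self_mem_Omega A))
  · rintro _ ⟨B, hB, rfl⟩
    exact perronRoot_eq_of_mulVec_eq (forall_entries_of_mem_Omega hA hB) hv (h B hB)

theorem exists_mem_Omega_mulVec_ge [NeZero n] (A : Matrix (Fin n) (Fin n) ℝ) (w : Fin n → ℝ)
    {B₀ : Matrix (Fin n) (Fin n) ℝ} (hB₀ : B₀ ∈ Omega A)
    (hne : B₀ *ᵥ w ≠ A *ᵥ fun _ => (∑ j, w j) / n) :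
    ∃ B ∈ Omega A, (A *ᵥ fun _ => (∑ j, w j) / n) ≤ B *ᵥ w ∧
      B *ᵥ w ≠ A *ᵥ fun _ => (∑ j, w j) / n := by
  choose ψ hψ using hB₀
  choose φ hφ using fun i => exists_perm_le_dotProduct_comp (A i) w (ψ i)
  have hB₀w (i : Fin n) : (B₀ *ᵥ w) i = (A i ∘ ψ i) ⬝ᵥ w :=
    congrArg (· ⬝ᵥ w) (funext (hψ i))
  refine ⟨of fun i j => A i (φ i j), fun i => ⟨φ i, fun _ => rfl⟩, fun i => (hφ i).1,
    fun h => hne (funext fun i => ?_)⟩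
  by_contra hi
  exact ((hφ i).2 (hB₀w i ▸ hi)).ne' (congrFun h i)

theorem exists_mem_Omega_mulVec_le [NeZero n] (A : Matrix (Fin n) (Fin n) ℝ) (w : Fin n → ℝ)
    {B₀ : Matrix (Fin n) (Fin n) ℝ} (hB₀ : B₀ ∈ Omega A)
    (hne : B₀ *ᵥ w ≠ A *ᵥ fun _ => (∑ j, w j) / n) :
    ∃ B ∈ Omega A, B *ᵥ w ≤ (A *ᵥ fun _ => (∑ j, w j) / n) ∧
      B *ᵥ w ≠ A *ᵥ fun _ => (∑ j, w j) / n := by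
  obtain ⟨B, hB, hle, hne'⟩ :=
    exists_mem_Omega_mulVec_ge (-A) w (neg_mem_Omega_neg hB₀) (by simpa [neg_mulVec] using hne)
  exact ⟨-B, by simpa using neg_mem_Omega_neg hB,
    by simpa [neg_mulVec] using neg_le.1 (neg_mulVec _ A ▸ hle),
    by simpa [neg_mulVec, neg_eq_iff_eq_neg] using hne'⟩

end Omega

theorem stmt13 {n : ℕ} (hn : 0 < n) (A : Matrix (Fin n) (Fin n) ℝ)
    (hA : ∀ i j, 0 < A i j) :
    (∑ i, ∑ j, A i j) / n = sSup (perronRoot '' Omega A) ↔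
      (∑ i, ∑ j, A i j) / n = sInf (perronRoot '' Omega A) := by
  have : NeZero n := ⟨hn.ne'⟩
  set m := (∑ i, ∑ j, A i j) / n
  set r := A *ᵥ 1
  have hr : ∀ i, 0 < r i := mulVec_pos hA zero_le_one one_ne_zero
  have hr0 : r ≠ 0 := mulVec_ne_zero hA zero_le_one one_ne_zero
  have hmean : (A *ᵥ fun _ => (∑ j, r j) / n) = m • r := by
    rw [← mulVec_smul]
    congr 1
    funext
    simp [r, m, mulVec, dotProduct]
  by_cases hconst : ∀ B ∈ Omega A, B *ᵥ r = m • r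
  · simp [perronRoot_image_Omega_eq_singleton hA hr hconst]
  push Not at hconst
  obtain ⟨B₀, hB₀, hne⟩ := hconst
  rw [← hmean] at hne
  obtain ⟨B₁, hB₁, hle₁, hne₁⟩ := exists_mem_Omega_mulVec_ge A r hB₀ hne
  obtain ⟨B₂, hB₂, hle₂, hne₂⟩ := exists_mem_Omega_mulVec_le A r hB₀ hne
  rw [hmean] at hle₁ hne₁ hle₂ hne₂
  have hsup : m < sSup (perronRoot '' Omega A) :=
    (lt_perronRoot_of_le_mulVec (forall_entries_of_mem_Omega hA hB₁) (fun i => (hr i).le) hr0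
      hle₁ hne₁.symm).trans_le
      (le_csSup (bddAbove_perronRoot_image_Omega fun i j => (hA i j).le) ⟨B₁, hB₁, rfl⟩)
  have hinf : sInf (perronRoot '' Omega A) < m :=
    (csInf_le (bddBelow_perronRoot_image _) ⟨B₂, hB₂, rfl⟩).trans_lt
      (perronRoot_lt_of_mulVec_le (forall_entries_of_mem_Omega hA hB₂) (fun i => (hr i).le) hr0
        hle₂ hne₂)
  exact iff_of_false hsup.ne hinf.ne'
end

section
/- Let A be an irreducible nonnegative n×n matrix with positive Perron eigenvector x. Then ρ(A) = min over B ∈ Ω(A) of ρ(B) if and only if for all i, j, k: x_k < x_j implies a_{i,k} ≥ a_{i,j}. -/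
open Matrix Finset

section Aux
-- every nonneg eigenvalue bounded by total sum of entries
lemma eig_bound {n : ℕ} (B : Matrix (Fin n) (Fin n) ℝ) (hB : ∀ i j, 0 ≤ B i j)
    (r : ℝ) (hr : 0 ≤ r) (v : Fin n → ℝ) (hv : v ≠ 0) (he : B.mulVec v = r • v) :
    r ≤ ∑ q, ∑ s, B q s := by
  have hn : 0 < n := by
    rcases Nat.eq_zero_or_pos n with h | h
    · exfalso; apply hv; funext i; exact absurd i.2 (by omega)
    · exact h
  obtain ⟨p, -, hp⟩ := Finset.exists_max_image (univ : Finset (Fin n)) (fun s => |v s|)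
    ⟨⟨0, hn⟩, mem_univ _⟩
  have hvp : 0 < |v p| := by
    rcases lt_or_eq_of_le (abs_nonneg (v p)) with h | h
    · exact h
    · exfalso; apply hv; funext s
      have h2 := hp s (mem_univ s)
      rw [← h] at h2
      have : |v s| = 0 := le_antisymm h2 (abs_nonneg _)
      simpa [abs_eq_zero] using this
  have key : r * |v p| ≤ (∑ q, ∑ s, B q s) * |v p| := by
    have h1 : r * |v p| = |(B.mulVec v) p| := by
      rw [he]; simp [abs_mul, abs_of_nonneg hr]
    rw [h1, Matrix.mulVec, dotProduct]
    calc |∑ s, B p s * v s| ≤ ∑ s, |B p s * v s| := Finset.abs_sum_le_sum_abs _ _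
      _ ≤ ∑ s, B p s * |v p| := by
          apply Finset.sum_le_sum; intro s _
          rw [abs_mul, abs_of_nonneg (hB p s)]
          exact mul_le_mul_of_nonneg_left (hp s (mem_univ s)) (hB p s)
      _ = (∑ s, B p s) * |v p| := by rw [Finset.sum_mul]
      _ ≤ (∑ q, ∑ s, B q s) * |v p| := by
          apply mul_le_mul_of_nonneg_right _ (abs_nonneg _)
          exact Finset.single_le_sum (f := fun q => ∑ s, B q s)
            (fun q _ => Finset.sum_nonneg fun s _ => hB q s) (mem_univ p)
  exact le_of_mul_le_mul_right key hvp

lemma pr_nonneg {n : ℕ} (A : Matrix (Fin n) (Fin n) ℝ) : 0 ≤ perronRoot A :=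
  Real.sSup_nonneg (fun r hr => hr.1)

lemma pr_bddAbove {n : ℕ} (B : Matrix (Fin n) (Fin n) ℝ) (hB : ∀ i j, 0 ≤ B i j) :
    BddAbove {r : ℝ | 0 ≤ r ∧ ∃ v : Fin n → ℝ, v ≠ 0 ∧ B.mulVec v = r • v} := by
  refine ⟨∑ q, ∑ s, B q s, ?_⟩
  rintro r ⟨hr, v, hv, he⟩
  exact eig_bound B hB r hr v hv he


lemma mulVec_apply' {n : ℕ} (C : Matrix (Fin n) (Fin n) ℝ) (u : Fin n → ℝ) (q : Fin n) :
    C.mulVec u q = ∑ s, C q s * u s := rfl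

lemma continuous_mulVec_apply {n : ℕ} (C : Matrix (Fin n) (Fin n) ℝ) (q : Fin n) :
    Continuous (fun u : Fin n → ℝ => C.mulVec u q) := by
  simp only [mulVec_apply']
  exact continuous_finset_sum _ fun s _ => continuous_const.mul (continuous_apply s)

lemma pos_eig {n : ℕ} (hn : 0 < n) (C : Matrix (Fin n) (Fin n) ℝ) (hC : ∀ i j, 0 < C i j)
    (ρ : ℝ) (hρ : 0 ≤ ρ) (x : Fin n → ℝ) (hx : ∀ i, 0 < x i)
    (hge : ∀ q, ρ * x q ≤ C.mulVec x q) :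
    ∃ t, ρ ≤ t ∧ ∃ u ∈ stdSimplex ℝ (Fin n), C.mulVec u = t • u := by
  set Δ := stdSimplex ℝ (Fin n) with hΔ
  set T : Set ℝ := {t : ℝ | ∃ u ∈ Δ, ∀ q, t * u q ≤ C.mulVec u q} with hT
  -- ρ ∈ T
  have hsx : 0 < ∑ s, x s := Finset.sum_pos (fun s _ => hx s) ⟨⟨0, hn⟩, mem_univ _⟩
  have hρT : ρ ∈ T := by
    refine ⟨(∑ s, x s)⁻¹ • x, ⟨fun q => ?_, ?_⟩, fun q => ?_⟩
    · have := (hx q).le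
      have := hsx.le
      simp only [Pi.smul_apply, smul_eq_mul]
      positivity
    · simp only [Pi.smul_apply, smul_eq_mul, ← Finset.mul_sum]
      field_simp
    · rw [Matrix.mulVec_smul]
      simp only [Pi.smul_apply, smul_eq_mul]
      rw [mul_comm ρ, mul_assoc]
      exact mul_le_mul_of_nonneg_left (by rw [mul_comm]; exact hge q) (by positivity)
  -- T bounded above
  have hRpos : (0:ℝ) < ∑ q, ∑ s, C q s :=
    Finset.sum_pos (fun q _ => Finset.sum_pos (fun s _ => hC q s) ⟨⟨0,hn⟩, mem_univ _⟩)
      ⟨⟨0,hn⟩, mem_univ _⟩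
  have hTbdd : BddAbove T := by
    refine ⟨n * (∑ q, ∑ s, C q s), ?_⟩
    rintro t ⟨u, ⟨hu0, hu1⟩, hu⟩
    rcases le_or_gt t 0 with h | h
    · exact h.trans (by positivity)
    · have : ∃ q ∈ (univ : Finset (Fin n)), ((n:ℝ))⁻¹ ≤ u q := by
        by_contra hcon
        push_neg at hcon
        have : ∑ s, u s < ∑ _s : Fin n, ((n:ℝ))⁻¹ :=
          Finset.sum_lt_sum_of_nonempty ⟨⟨0,hn⟩, mem_univ _⟩ (fun s _ => hcon s (mem_univ s))
        rw [hu1] at this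
        simp only [Finset.sum_const, card_univ, Fintype.card_fin, nsmul_eq_mul] at this
        rw [mul_inv_cancel₀ (by positivity : (n:ℝ) ≠ 0)] at this
        exact lt_irrefl _ this
      obtain ⟨q, -, hq⟩ := this
      have h1 : t * (n:ℝ)⁻¹ ≤ C.mulVec u q :=
        le_trans (mul_le_mul_of_nonneg_left hq h.le) (hu q)
      have h2 : C.mulVec u q ≤ ∑ p, ∑ s, C p s := by
        rw [mulVec_apply']
        calc ∑ s, C q s * u s ≤ ∑ s, C q s * 1 := by
              apply Finset.sum_le_sum; intro s _
              exact mul_le_mul_of_nonneg_left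
                (by rw [← hu1]; exact Finset.single_le_sum (fun p _ => hu0 p) (mem_univ s))
                (hC q s).le
          _ = ∑ s, C q s := by simp
          _ ≤ ∑ p, ∑ s, C p s := Finset.single_le_sum
              (f := fun p => ∑ s, C p s) (fun p _ => Finset.sum_nonneg fun s _ => (hC p s).le)
              (mem_univ q)
    -- t * n⁻¹ ≤ R so t ≤ n R
      have := le_trans h1 h2
      calc t = t * (n:ℝ)⁻¹ * n := by field_simp
        _ ≤ (∑ p, ∑ s, C p s) * n := mul_le_mul_of_nonneg_right this (by positivity)
        _ = n * (∑ p, ∑ s, C p s) := by ring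
  have hTne : T.Nonempty := ⟨ρ, hρT⟩
  set t₀ := sSup T with ht₀
  have hρt₀ : ρ ≤ t₀ := le_csSup hTbdd hρT
  -- attainment via compactness
  have hcompΔ : IsCompact Δ := isCompact_stdSimplex _ _
  have hclosedΔ : IsClosed Δ := hcompΔ.isClosed
  set Z : T → Set (Fin n → ℝ) := fun t =>
    {u | u ∈ Δ ∧ ∀ q, (t : ℝ) * u q ≤ C.mulVec u q} with hZ
  have hZclosed : ∀ t, IsClosed (Z t) := by
    intro t
    apply IsClosed.inter hclosedΔ
    have heq : {u : Fin n → ℝ | ∀ q, (t:ℝ) * u q ≤ C.mulVec u q} =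
        ⋂ q, {u | (t:ℝ) * u q ≤ C.mulVec u q} := by ext u; simp
    show IsClosed {u : Fin n → ℝ | ∀ q, (t:ℝ) * u q ≤ C.mulVec u q}
    rw [heq]
    exact isClosed_iInter fun q => isClosed_le
      (continuous_const.mul (continuous_apply q)) (continuous_mulVec_apply C q)
  have hZsub : ∀ t, Z t ⊆ Δ := fun t u hu => hu.1
  have hZcomp : ∀ t, IsCompact (Z t) := fun t =>
    hcompΔ.of_isClosed_subset (hZclosed t) (hZsub t)
  have hZmono : ∀ (t t' : T), (t:ℝ) ≤ (t':ℝ) → Z t' ⊆ Z t := by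
    rintro t t' htt u ⟨huΔ, hu⟩
    exact ⟨huΔ, fun q => le_trans (mul_le_mul_of_nonneg_right htt (huΔ.1 q)) (hu q)⟩
  have hZdir : Directed (· ⊇ ·) Z := by
    intro t t'
    rcases le_total (t:ℝ) (t':ℝ) with h | h
    · exact ⟨t', hZmono t t' h, fun u hu => hu⟩
    · exact ⟨t, fun u hu => hu, hZmono t' t h⟩
  have hZne : ∀ t : T, (Z t).Nonempty := by
    rintro ⟨t, u, huΔ, hu⟩
    exact ⟨u, huΔ, hu⟩
  have : Nonempty T := ⟨⟨ρ, hρT⟩⟩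
  obtain ⟨u, hu⟩ := IsCompact.nonempty_iInter_of_directed_nonempty_isCompact_isClosed
    Z hZdir hZne hZcomp hZclosed
  simp only [Set.mem_iInter] at hu
  have huΔ : u ∈ Δ := (hu ⟨ρ, hρT⟩).1
  have huT : ∀ t ∈ T, ∀ q, t * u q ≤ C.mulVec u q := fun t ht q => (hu ⟨t, ht⟩).2 q
  -- C.mulVec u ≥ 0 and indeed > 0
  have hus : ∃ s, 0 < u s := by
    by_contra hcon
    push_neg at hcon
    have h4 : ∑ s, u s ≤ 0 := Finset.sum_nonpos fun s _ => hcon s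
    rw [huΔ.2] at h4; norm_num at h4
  obtain ⟨s₀, hs₀⟩ := hus
  have hCu_pos : ∀ q, 0 < C.mulVec u q := by
    intro q
    rw [mulVec_apply']
    exact Finset.sum_pos' (fun s _ => mul_nonneg (hC q s).le (huΔ.1 s))
      ⟨s₀, mem_univ _, mul_pos (hC q s₀) hs₀⟩
  -- subinvariance at t₀
  have ht₀u : ∀ q, t₀ * u q ≤ C.mulVec u q := by
    intro q
    rcases eq_or_lt_of_le (huΔ.1 q) with h | h
    · rw [← h, mul_zero]; exact (hCu_pos q).le
    · rw [← le_div_iff₀ h]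
      apply csSup_le hTne
      intro t ht
      rw [le_div_iff₀ h]
      exact huT t ht q
  -- equality
  refine ⟨t₀, hρt₀, u, huΔ, ?_⟩
  by_contra hne
  have hstrict : ∃ q, t₀ * u q < C.mulVec u q := by
    by_contra hcon
    push_neg at hcon
    apply hne
    funext q
    exact le_antisymm (hcon q) (ht₀u q)
  obtain ⟨q₀, hq₀⟩ := hstrict
  set w := C.mulVec u with hw
  set d : Fin n → ℝ := fun q => w q - t₀ * u q with hd
  have hd0 : ∀ q, 0 ≤ d q := fun q => sub_nonneg.2 (ht₀u q)
  have hdq₀ : 0 < d q₀ := sub_pos.2 hq₀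
  have hwpos : ∀ q, 0 < w q := hCu_pos
  have hkey : ∀ q, t₀ * w q < C.mulVec w q := by
    intro q
    have h1 : C.mulVec w q - t₀ * w q = ∑ s, C q s * d s := by
      simp only [hd, mulVec_apply', hw, mul_sub, Finset.sum_sub_distrib, Finset.mul_sum]
      ring_nf
    have h2 : 0 < ∑ s, C q s * d s :=
      Finset.sum_pos' (fun s _ => mul_nonneg (hC q s).le (hd0 s))
        ⟨q₀, mem_univ _, mul_pos (hC q q₀) hdq₀⟩
    linarith [h1 ▸ h2]
  -- pick ε
  obtain ⟨q₁, -, hq₁⟩ := Finset.exists_min_image (univ : Finset (Fin n))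
    (fun q => (C.mulVec w q - t₀ * w q) / w q) ⟨⟨0, hn⟩, mem_univ _⟩
  set ε := (C.mulVec w q₁ - t₀ * w q₁) / w q₁ with hε
  have hεpos : 0 < ε := div_pos (sub_pos.2 (hkey q₁)) (hwpos q₁)
  have hεle : ∀ q, (t₀ + ε) * w q ≤ C.mulVec w q := by
    intro q
    have := hq₁ q (mem_univ q)
    rw [div_le_div_iff₀ (hwpos q₁) (hwpos q)] at this
    have h3 : ε * w q ≤ C.mulVec w q - t₀ * w q := by
      rw [hε, div_mul_eq_mul_div, div_le_iff₀ (hwpos q₁)]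
      linarith [this]
    linarith
  -- normalize w and contradict sup
  have hsw : 0 < ∑ s, w s := Finset.sum_pos (fun s _ => hwpos s) ⟨⟨0,hn⟩, mem_univ _⟩
  have hmemT : t₀ + ε ∈ T := by
    refine ⟨(∑ s, w s)⁻¹ • w, ⟨fun q => ?_, ?_⟩, fun q => ?_⟩
    · have := (hwpos q).le
      have := hsw.le
      simp only [Pi.smul_apply, smul_eq_mul]
      positivity
    · simp only [Pi.smul_apply, smul_eq_mul, ← Finset.mul_sum]
      field_simp
    · rw [Matrix.mulVec_smul]
      simp only [Pi.smul_apply, smul_eq_mul]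
      rw [mul_comm (t₀ + ε), mul_assoc]
      exact mul_le_mul_of_nonneg_left (by rw [mul_comm]; exact hεle q) (by positivity)
  have := le_csSup hTbdd hmemT
  linarith


lemma nonneg_eig {n : ℕ} (hn : 0 < n) (B : Matrix (Fin n) (Fin n) ℝ) (hB : ∀ i j, 0 ≤ B i j)
    (ρ : ℝ) (hρ : 0 ≤ ρ) (x : Fin n → ℝ) (hx : ∀ i, 0 < x i)
    (hge : ∀ q, ρ * x q ≤ B.mulVec x q) :
    ∃ t, ρ ≤ t ∧ ∃ u : Fin n → ℝ, u ≠ 0 ∧ B.mulVec u = t • u := by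
  set Δ := stdSimplex ℝ (Fin n) with hΔ
  set J : Matrix (Fin n) (Fin n) ℝ := Matrix.of fun _ _ => (1:ℝ) with hJ
  set R₁ : ℝ := ∑ q : Fin n, ∑ s : Fin n, (B q s + 1) with hR₁
  -- for each m, a perturbed eigenpair
  have key : ∀ m : ℕ, ∃ t, ∃ u ∈ Δ, ρ ≤ t ∧ t ≤ R₁ ∧
      (B + ((m:ℝ)+1)⁻¹ • J).mulVec u = t • u := by
    intro m
    set ε : ℝ := ((m:ℝ)+1)⁻¹ with hε
    have hεpos : 0 < ε := by positivity
    have hε1 : ε ≤ 1 := by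
      rw [hε]
      rw [inv_le_one₀ (by positivity)]
      linarith [Nat.cast_nonneg (α := ℝ) m]
    set C : Matrix (Fin n) (Fin n) ℝ := B + ε • J with hC
    have hCapp : ∀ i j, C i j = B i j + ε := by
      intro i j; simp [hC, hJ]
    have hCpos : ∀ i j, 0 < C i j := by
      intro i j; rw [hCapp]; linarith [hB i j]
    have hCge : ∀ q, ρ * x q ≤ C.mulVec x q := by
      intro q
      refine le_trans (hge q) ?_
      rw [mulVec_apply', mulVec_apply']
      apply Finset.sum_le_sum
      intro s _
      exact mul_le_mul_of_nonneg_right (by rw [hCapp]; linarith) (hx s).le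
    obtain ⟨t, htρ, u, huΔ, hueq⟩ := pos_eig hn C hCpos ρ hρ x hx hCge
    refine ⟨t, u, huΔ, htρ, ?_, hueq⟩
    have hune : u ≠ 0 := by
      intro h
      rw [h] at huΔ
      have := huΔ.2
      simp at this
    have := eig_bound C (fun i j => (hCpos i j).le) t (le_trans hρ htρ) u hune hueq
    refine le_trans this ?_
    rw [hR₁]
    apply Finset.sum_le_sum
    intro q _
    apply Finset.sum_le_sum
    intro s _
    rw [hCapp]; linarith [hB q s]
  -- the closed sets
  set Z : ℕ → Set (ℝ × (Fin n → ℝ)) := fun m =>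
    {p | p.1 ∈ Set.Icc ρ R₁ ∧ p.2 ∈ Δ ∧
      ∀ q, B.mulVec p.2 q ≤ p.1 * p.2 q ∧ p.1 * p.2 q ≤ B.mulVec p.2 q + ((m:ℝ)+1)⁻¹} with hZ
  have hZne : ∀ m, (Z m).Nonempty := by
    intro m
    obtain ⟨t, u, huΔ, htρ, htR, hueq⟩ := key m
    refine ⟨(t, u), ⟨htρ, htR⟩, huΔ, fun q => ?_⟩
    have hJu : J.mulVec u q = 1 := by
      rw [mulVec_apply']
      simp only [hJ, Matrix.of_apply, one_mul]
      exact huΔ.2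
    have h1 : t * u q = B.mulVec u q + ((m:ℝ)+1)⁻¹ := by
      have := congrFun hueq q
      rw [Matrix.add_mulVec, Matrix.smul_mulVec] at this
      simp only [Pi.add_apply, Pi.smul_apply, smul_eq_mul, hJu, mul_one] at this
      linarith [this]
    have hinv : (0:ℝ) < ((m:ℝ)+1)⁻¹ := by positivity
    exact ⟨by rw [h1]; linarith, le_of_eq h1⟩
  have hZmono : ∀ m m', m ≤ m' → Z m' ⊆ Z m := by
    intro m m' h p hp
    refine ⟨hp.1, hp.2.1, fun q => ⟨(hp.2.2 q).1, le_trans (hp.2.2 q).2 ?_⟩⟩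
    have : ((m':ℝ)+1)⁻¹ ≤ ((m:ℝ)+1)⁻¹ := by
      apply inv_anti₀ (by positivity)
      have : (m:ℝ) ≤ (m':ℝ) := Nat.cast_le.2 h
      linarith
    linarith
  have hZdir : Directed (· ⊇ ·) Z := by
    intro m m'
    rcases le_total m m' with h | h
    · exact ⟨m', hZmono m m' h, fun p hp => hp⟩
    · exact ⟨m, fun p hp => hp, hZmono m' m h⟩
  have hZclosed : ∀ m, IsClosed (Z m) := by
    intro m
    have c1 : Continuous (fun p : ℝ × (Fin n → ℝ) => p.1) := continuous_fst
    apply IsClosed.inter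
    · exact (isClosed_Icc).preimage continuous_fst
    apply IsClosed.inter
    · exact (isCompact_stdSimplex _ _).isClosed.preimage continuous_snd
    have : {p : ℝ × (Fin n → ℝ) | ∀ q, B.mulVec p.2 q ≤ p.1 * p.2 q ∧
        p.1 * p.2 q ≤ B.mulVec p.2 q + ((m:ℝ)+1)⁻¹} =
        ⋂ q, ({p : ℝ × (Fin n → ℝ) | B.mulVec p.2 q ≤ p.1 * p.2 q} ∩
          {p | p.1 * p.2 q ≤ B.mulVec p.2 q + ((m:ℝ)+1)⁻¹}) := by
      ext p; simp [Set.mem_iInter, forall_and]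
    show IsClosed {p : ℝ × (Fin n → ℝ) | ∀ q, B.mulVec p.2 q ≤ p.1 * p.2 q ∧
        p.1 * p.2 q ≤ B.mulVec p.2 q + ((m:ℝ)+1)⁻¹}
    rw [this]
    apply isClosed_iInter
    intro q
    have cB : Continuous (fun p : ℝ × (Fin n → ℝ) => B.mulVec p.2 q) :=
      (continuous_mulVec_apply B q).comp continuous_snd
    have cmul : Continuous (fun p : ℝ × (Fin n → ℝ) => p.1 * p.2 q) :=
      continuous_fst.mul ((continuous_apply q).comp continuous_snd)
    exact (isClosed_le cB cmul).inter (isClosed_le cmul (cB.add continuous_const))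
  have hZcomp : ∀ m, IsCompact (Z m) := by
    intro m
    apply IsCompact.of_isClosed_subset ((isCompact_Icc).prod (isCompact_stdSimplex _ _))
      (hZclosed m)
    rintro p ⟨h1, h2, -⟩
    exact ⟨h1, h2⟩
  obtain ⟨⟨t, u⟩, hp⟩ := IsCompact.nonempty_iInter_of_directed_nonempty_isCompact_isClosed
    Z hZdir hZne hZcomp hZclosed
  simp only [Set.mem_iInter] at hp
  have huΔ : u ∈ Δ := (hp 0).2.1
  have htρ : ρ ≤ t := (hp 0).1.1
  have heq : ∀ q, t * u q = B.mulVec u q := by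
    intro q
    have hle : ∀ m : ℕ, t * u q - B.mulVec u q ≤ ((m:ℝ)+1)⁻¹ := by
      intro m
      linarith [((hp m).2.2 q).2]
    have hge0 : 0 ≤ t * u q - B.mulVec u q := by linarith [((hp 0).2.2 q).1]
    have : t * u q - B.mulVec u q ≤ 0 := by
      by_contra hcon
      push_neg at hcon
      obtain ⟨m, hm⟩ := exists_nat_one_div_lt hcon
      have := hle m
      rw [one_div] at hm
      linarith
    linarith
  refine ⟨t, htρ, u, ?_, ?_⟩
  · intro h
    rw [h] at huΔ
    have := huΔ.2
    simp at this
  · funext q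
    rw [← heq q]
    simp [mul_comm]


lemma pow_entry_nonneg {n : ℕ} (A : Matrix (Fin n) (Fin n) ℝ) (hA : ∀ i j, 0 ≤ A i j) :
    ∀ m i j, 0 ≤ (A ^ m) i j := by
  intro m
  induction m with
  | zero => intro i j; simp [Matrix.one_apply]; split <;> norm_num
  | succ m ih =>
    intro i j
    rw [pow_succ, Matrix.mul_apply]
    exact Finset.sum_nonneg fun s _ => mul_nonneg (ih i s) (hA s j)

lemma pow_mulVec_eig {n : ℕ} (A : Matrix (Fin n) (Fin n) ℝ) (x : Fin n → ℝ) (ρ : ℝ)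
    (h : A.mulVec x = ρ • x) : ∀ m, (A ^ m).mulVec x = ρ ^ m • x := by
  intro m
  induction m with
  | zero => simp
  | succ m ih =>
    rw [pow_succ', ← Matrix.mulVec_mulVec, ih, Matrix.mulVec_smul, h, smul_smul, pow_succ']
    rw [mul_comm]

lemma pow_diff_le {M : ℕ} {ρ r : ℝ} (hr : 0 ≤ r) (hρ : r ≤ ρ) (hM : 0 < M) :
    ρ ^ M - r ^ M ≤ (ρ - r) * M * ρ ^ (M - 1) := by
  obtain ⟨m, rfl⟩ : ∃ m, M = m + 1 := ⟨M - 1, by omega⟩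
  clear hM
  induction m with
  | zero => simp
  | succ m ih =>
    have hρ0 : 0 ≤ ρ := le_trans hr hρ
    simp only [Nat.add_sub_cancel] at ih ⊢
    have h1 : ρ ^ (m + 2) - r ^ (m + 2) = ρ * (ρ ^ (m+1) - r ^ (m+1)) + (ρ - r) * r ^ (m+1) := by
      ring
    rw [h1]
    have ih' : ρ ^ (m + 1) - r ^ (m + 1) ≤ (ρ - r) * ((m:ℝ)+1) * ρ ^ m := by
      push_cast at ih; linarith
    have h2 : ρ * (ρ ^ (m+1) - r ^ (m+1)) ≤ ρ * ((ρ - r) * ((m:ℝ)+1) * ρ ^ m) :=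
      mul_le_mul_of_nonneg_left ih' hρ0
    have h3 : (ρ - r) * r ^ (m+1) ≤ (ρ - r) * ρ ^ (m+1) :=
      mul_le_mul_of_nonneg_left (pow_le_pow_left₀ hr hρ _) (by linarith)
    have h4 : (ρ:ℝ) * ((ρ - r) * ((m:ℝ)+1) * ρ ^ m) + (ρ - r) * ρ ^ (m+1)
        = (ρ - r) * ((m:ℝ) + 2) * ρ ^ (m+1) := by ring
    push_cast
    linarith

lemma deficiency {n : ℕ} (A B : Matrix (Fin n) (Fin n) ℝ)
    (hA : ∀ i j, 0 ≤ A i j) (hB : ∀ i j, 0 ≤ B i j)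
    (hirr : ∀ p q : Fin n, ∃ m : ℕ, 0 < m ∧ 0 < (A ^ m) p q)
    (x : Fin n → ℝ) (hx : ∀ i, 0 < x i) (ρ : ℝ) (hρ : 0 < ρ)
    (heig : A.mulVec x = ρ • x)
    (i : Fin n) (hrow : ∀ p, p ≠ i → ∀ q, B p q = A p q)
    (hle : ∀ q, B.mulVec x q ≤ ρ * x q) (hi : B.mulVec x i < ρ * x i) :
    ∃ M : ℕ, 0 < M ∧ ∃ δ : ℝ, 0 < δ ∧ ∀ q, ((B ^ M).mulVec x) q ≤ ρ ^ M * x q - δ := by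
  set z : ℕ → Fin n → ℝ := fun m => (B ^ m).mulVec x with hz
  have hz0 : z 0 = x := by simp [hz]
  have hz_succ : ∀ m, z (m + 1) = B.mulVec (z m) := by
    intro m
    simp only [hz]
    rw [Matrix.mulVec_mulVec, ← pow_succ']
  have hz_step : ∀ m q, z (m + 1) q ≤ ρ * z m q := by
    intro m
    induction m with
    | zero =>
      intro q
      rw [hz_succ, hz0]
      exact hle q
    | succ m ih =>
      intro q
      rw [hz_succ (m+1), mulVec_apply']
      have : ∑ s, B q s * z (m+1) s ≤ ∑ s, B q s * (ρ * z m s) := by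
        apply Finset.sum_le_sum
        intro s _
        exact mul_le_mul_of_nonneg_left (ih s) (hB q s)
      refine le_trans this ?_
      rw [hz_succ m, mulVec_apply', Finset.mul_sum]
      apply le_of_eq
      apply Finset.sum_congr rfl
      intro s _
      ring
  have hz_pow : ∀ m q, z m q ≤ ρ ^ m * x q := by
    intro m
    induction m with
    | zero => intro q; rw [hz0]; simp
    | succ m ih =>
      intro q
      calc z (m+1) q ≤ ρ * z m q := hz_step m q
        _ ≤ ρ * (ρ ^ m * x q) := mul_le_mul_of_nonneg_left (ih q) hρ.le
        _ = ρ ^ (m+1) * x q := by ring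
  have persist : ∀ m q, z m q < ρ ^ m * x q → ∀ k, z (m + k) q < ρ ^ (m + k) * x q := by
    intro m q h k
    induction k with
    | zero => simpa using h
    | succ k ih =>
      have h1 : z (m + k + 1) q ≤ ρ * z (m + k) q := hz_step (m+k) q
      have h2 : ρ * z (m + k) q < ρ * (ρ ^ (m+k) * x q) := mul_lt_mul_of_pos_left ih hρ
      have : z (m + (k+1)) q < ρ ^ (m + k + 1) * x q := by
        have : z (m + (k + 1)) q = z (m + k + 1) q := by ring_nf
        rw [this]
        calc z (m + k + 1) q ≤ ρ * z (m + k) q := h1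
          _ < ρ * (ρ ^ (m+k) * x q) := h2
          _ = ρ ^ (m + k + 1) * x q := by ring
      convert this using 3 <;> omega
  have key_i : z 1 i < ρ ^ 1 * x i := by
    rw [hz_succ, hz0, pow_one]
    exact hi
  have step : ∀ q p, q ≠ i → 0 < A q p → (∃ m, 0 < m ∧ z m p < ρ ^ m * x p) →
      ∃ m, 0 < m ∧ z m q < ρ ^ m * x q := by
    rintro q p hq hqp ⟨m, hm, hmp⟩
    refine ⟨m + 1, by omega, ?_⟩
    rw [hz_succ, mulVec_apply']
    have hrow' : ∀ s, B q s = A q s := hrow q hq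
    have h1 : ∑ s, B q s * z m s < ∑ s, A q s * (ρ ^ m * x s) := by
      simp only [hrow']
      apply Finset.sum_lt_sum
      · intro s _
        exact mul_le_mul_of_nonneg_left (hz_pow m s) (hA q s)
      · exact ⟨p, mem_univ p, mul_lt_mul_of_pos_left hmp hqp⟩
    have h2 : ∑ s, A q s * (ρ ^ m * x s) = ρ ^ (m+1) * x q := by
      have h3 : ∑ s, A q s * (ρ ^ m * x s) = ρ ^ m * ∑ s, A q s * x s := by
        rw [Finset.mul_sum]
        apply Finset.sum_congr rfl
        intro s _
        ring
      rw [h3, ← mulVec_apply', heig]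
      simp only [Pi.smul_apply, smul_eq_mul]
      ring
    linarith
  have reach : ∀ m' q, 0 < (A ^ m') q i → ∃ m, 0 < m ∧ z m q < ρ ^ m * x q := by
    intro m'
    induction m' with
    | zero =>
      intro q hq
      have : q = i := by
        by_contra h
        rw [pow_zero, Matrix.one_apply_ne h] at hq
        exact lt_irrefl _ hq
      subst this
      exact ⟨1, one_pos, key_i⟩
    | succ m' ih =>
      intro q hq
      rw [pow_succ', Matrix.mul_apply] at hq
      have : ∃ s, 0 < A q s * (A ^ m') s i := by
        by_contra hcon
        push_neg at hcon
        have : ∑ s, A q s * (A ^ m') s i ≤ 0 := Finset.sum_nonpos fun s _ => hcon s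
        linarith
      obtain ⟨s, hs⟩ := this
      have hAqs : 0 < A q s := by
        rcases mul_pos_iff.1 hs with ⟨h1, -⟩ | ⟨h1, -⟩
        · exact h1
        · exact absurd h1 (not_lt.2 (hA q s))
      have hAsi : 0 < (A ^ m') s i := by
        rcases mul_pos_iff.1 hs with ⟨-, h1⟩ | ⟨-, h1⟩
        · exact h1
        · exact absurd h1 (not_lt.2 (pow_entry_nonneg A hA m' s i))
      rcases eq_or_ne q i with rfl | hqi
      · exact ⟨1, one_pos, key_i⟩
      · exact step q s hqi hAqs (ih s hAsi)
  have good : ∀ q, ∃ m, 0 < m ∧ z m q < ρ ^ m * x q := by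
    intro q
    obtain ⟨m', -, hm'⟩ := hirr q i
    exact reach m' q hm'
  choose mf hmf0 hmflt using good
  set M : ℕ := 1 + ∑ q, mf q with hM
  have hMpos : 0 < M := by omega
  have hMq : ∀ q, z M q < ρ ^ M * x q := by
    intro q
    have h1 : mf q ≤ M := by
      have : mf q ≤ ∑ p, mf p := Finset.single_le_sum (fun p _ => Nat.zero_le _) (mem_univ q)
      omega
    have := persist (mf q) q (hmflt q) (M - mf q)
    rwa [Nat.add_sub_cancel' h1] at this
  obtain ⟨q₂, -, hq₂⟩ := Finset.exists_min_image (univ : Finset (Fin n))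
    (fun q => ρ ^ M * x q - z M q) ⟨i, mem_univ i⟩
  refine ⟨M, hMpos, ρ ^ M * x q₂ - z M q₂, by linarith [hMq q₂], fun q => ?_⟩
  have := hq₂ q (mem_univ q)
  show z M q ≤ ρ ^ M * x q - (ρ ^ M * x q₂ - z M q₂)
  linarith

lemma eig_le_of_deficiency {n : ℕ} (B : Matrix (Fin n) (Fin n) ℝ) (hB : ∀ i j, 0 ≤ B i j)
    (x : Fin n → ℝ) (hx : ∀ i, 0 < x i) (ρ : ℝ) (hρ : 0 < ρ)
    (M : ℕ) (hM : 0 < M) (δ : ℝ) (hδ : 0 < δ)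
    (hdef : ∀ q, ((B ^ M).mulVec x) q ≤ ρ ^ M * x q - δ) :
    ∃ c, 0 ≤ c ∧ c < ρ ∧ ∀ r (v : Fin n → ℝ), 0 ≤ r → v ≠ 0 → B.mulVec v = r • v → r ≤ c := by
  rcases Nat.eq_zero_or_pos n with hn | hn
  · refine ⟨ρ/2, by linarith, by linarith, fun r v hr hv he => ?_⟩
    exfalso; apply hv; funext s; exact absurd s.2 (by omega)
  obtain ⟨pₓ, -, hpₓ⟩ := Finset.exists_max_image (univ : Finset (Fin n)) x ⟨⟨0,hn⟩, mem_univ _⟩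
  have hρM1 : 0 < ρ ^ (M-1) := pow_pos hρ _
  have hρM : ρ ^ M = ρ * ρ ^ (M-1) := by
    conv_lhs => rw [show M = 1 + (M-1) by omega]
    rw [pow_add, pow_one]
  set δ' : ℝ := δ / x pₓ with hδ'
  have hδ'pos : 0 < δ' := div_pos hδ (hx pₓ)
  have hδ'le : δ' ≤ ρ ^ M := by
    have h0 := hdef ⟨0, hn⟩
    have h1 : 0 ≤ ((B ^ M).mulVec x) ⟨0, hn⟩ := by
      rw [mulVec_apply']
      exact Finset.sum_nonneg fun s _ =>
        mul_nonneg (pow_entry_nonneg B hB M _ s) (hx s).le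
    have h2 : δ ≤ ρ ^ M * x ⟨0, hn⟩ := by linarith
    rw [hδ', div_le_iff₀ (hx pₓ)]
    calc δ ≤ ρ ^ M * x ⟨0, hn⟩ := h2
      _ ≤ ρ ^ M * x pₓ := mul_le_mul_of_nonneg_left (hpₓ _ (mem_univ _)) (pow_pos hρ M).le
  set δ'' : ℝ := δ' / (M * ρ ^ (M-1)) with hδ''
  have hKpos : 0 < (M:ℝ) * ρ ^ (M-1) := by positivity
  have hδ''pos : 0 < δ'' := div_pos hδ'pos hKpos
  have hMcast : (1:ℝ) ≤ (M:ℝ) := by exact_mod_cast hM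
  have hδ''le : δ'' ≤ ρ := by
    rw [hδ'', div_le_iff₀ hKpos]
    nlinarith [hδ'le, hρM1, hρ]
  refine ⟨ρ - δ'', by linarith, by linarith, fun r v hr hv he => ?_⟩
  have hBM : (B ^ M).mulVec v = r ^ M • v := pow_mulVec_eig B v r he M
  obtain ⟨p₀, -, hp₀⟩ := Finset.exists_max_image (univ : Finset (Fin n))
    (fun s => |v s| / x s) ⟨⟨0,hn⟩, mem_univ _⟩
  set t : ℝ := |v p₀| / x p₀ with ht
  have htpos : 0 < t := by
    obtain ⟨s, hs⟩ := Function.ne_iff.1 hv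
    have h1 : 0 < |v s| / x s := div_pos (abs_pos.2 hs) (hx s)
    exact lt_of_lt_of_le h1 (hp₀ s (mem_univ s))
  have hvs : ∀ s, |v s| ≤ t * x s := by
    intro s
    have h := hp₀ s (mem_univ s)
    rw [div_le_iff₀ (hx s)] at h
    linarith
  have hmain : r ^ M * t * x p₀ ≤ t * (ρ ^ M * x p₀ - δ) := by
    have h1 : r ^ M * |v p₀| = |((B ^ M).mulVec v) p₀| := by
      rw [hBM]
      simp only [Pi.smul_apply, smul_eq_mul, abs_mul]
      rw [abs_of_nonneg (pow_nonneg hr M)]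
    have h2 : |((B ^ M).mulVec v) p₀| ≤ t * ((B ^ M).mulVec x) p₀ := by
      rw [mulVec_apply', mulVec_apply', Finset.mul_sum]
      calc |∑ s, (B ^ M) p₀ s * v s| ≤ ∑ s, |(B ^ M) p₀ s * v s| :=
            Finset.abs_sum_le_sum_abs _ _
        _ ≤ ∑ s, t * ((B ^ M) p₀ s * x s) := by
            apply Finset.sum_le_sum
            intro s _
            rw [abs_mul, abs_of_nonneg (pow_entry_nonneg B hB M p₀ s)]
            calc (B ^ M) p₀ s * |v s| ≤ (B ^ M) p₀ s * (t * x s) :=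
                  mul_le_mul_of_nonneg_left (hvs s) (pow_entry_nonneg B hB M p₀ s)
              _ = t * ((B ^ M) p₀ s * x s) := by ring
    have h3 : t * ((B ^ M).mulVec x) p₀ ≤ t * (ρ ^ M * x p₀ - δ) :=
      mul_le_mul_of_nonneg_left (hdef p₀) htpos.le
    have h4 : t * x p₀ = |v p₀| := by
      rw [ht, div_mul_eq_mul_div, mul_div_assoc, div_self (hx p₀).ne', mul_one]
    calc r ^ M * t * x p₀ = r ^ M * |v p₀| := by rw [mul_assoc, h4]
      _ = |((B ^ M).mulVec v) p₀| := h1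
      _ ≤ t * ((B ^ M).mulVec x) p₀ := h2
      _ ≤ t * (ρ ^ M * x p₀ - δ) := h3
  have hfin : r ^ M ≤ ρ ^ M - δ' := by
    have h5 : r ^ M * x p₀ ≤ ρ ^ M * x p₀ - δ := by
      nlinarith [htpos, hx p₀, hmain]
    have h6 : δ' * x p₀ ≤ δ := by
      rw [hδ', div_mul_eq_mul_div, div_le_iff₀ (hx pₓ)]
      nlinarith [hδ.le, hpₓ p₀ (mem_univ p₀), hx p₀, hx pₓ]
    nlinarith [hx p₀]
  have hrρ : r ≤ ρ := by
    by_contra hcon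
    push_neg at hcon
    have := pow_le_pow_left₀ hρ.le hcon.le M
    nlinarith
  have h8 := pow_diff_le hr hrρ hM
  have h9 : δ' ≤ (ρ - r) * ((M:ℝ) * ρ ^ (M-1)) := by nlinarith
  have h10 : δ'' ≤ ρ - r := by
    rw [hδ'', div_le_iff₀ hKpos]
    linarith
  linarith

end Aux

theorem stmt17 {n : ℕ} (A : Matrix (Fin n) (Fin n) ℝ) (hA : ∀ i j, 0 ≤ A i j)
    (hirr : Irred A) (x : Fin n → ℝ) (hxpos : ∀ i, 0 < x i)
    (heig : A.mulVec x = perronRoot A • x) :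
    perronRoot A = sInf (perronRoot '' Omega A) ↔
      (∀ i j k, x k < x j → A i j ≤ A i k) := by
  set ρ : ℝ := perronRoot A with hρdef
  have hAomega : A ∈ Omega A := fun i => ⟨Equiv.refl _, fun j => rfl⟩
  rcases Nat.eq_zero_or_pos n with hn | hn
  · -- trivial case n = 0
    subst hn
    have hall : ∀ B : Matrix (Fin 0) (Fin 0) ℝ, perronRoot B = 0 := by
      intro B
      have : {r : ℝ | 0 ≤ r ∧ ∃ v : Fin 0 → ℝ, v ≠ 0 ∧ B.mulVec v = r • v} = ∅ := by
        ext r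
        simp only [Set.mem_setOf_eq, Set.mem_empty_iff_false, iff_false, not_and]
        rintro - ⟨v, hv, -⟩
        exact hv (funext fun s => absurd s.2 (by omega))
      rw [perronRoot, this, Real.sSup_empty]
    have himg : perronRoot '' Omega A = {0} := by
      apply Set.eq_singleton_iff_nonempty_unique_mem.2
      exact ⟨⟨perronRoot A, A, hAomega, rfl⟩, by rintro _ ⟨B, -, rfl⟩; exact hall B⟩
    constructor
    · intro _ i; exact absurd i.2 (by omega)
    · intro _
      rw [himg, csInf_singleton]
      exact hall A
  · -- main case n > 0
    have hρ0 : 0 ≤ ρ := by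
      have h1 := congrFun heig ⟨0, hn⟩
      have h2 : 0 ≤ A.mulVec x ⟨0, hn⟩ := by
        rw [mulVec_apply']
        exact Finset.sum_nonneg fun s _ => mul_nonneg (hA _ s) (hxpos s).le
      simp only [Pi.smul_apply, smul_eq_mul] at h1
      nlinarith [hxpos ⟨0, hn⟩]
    have hlower : (∀ i j k, x k < x j → A i j ≤ A i k) →
        ∀ B ∈ Omega A, ρ ≤ perronRoot B := by
      intro hcond B hBom
      have hBnn : ∀ p q, 0 ≤ B p q := by
        intro p q
        obtain ⟨φ, hφ⟩ := hBom p
        rw [hφ q]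
        exact hA p (φ q)
      have hBge : ∀ q, ρ * x q ≤ B.mulVec x q := by
        intro q
        obtain ⟨φ, hφ⟩ := hBom q
        have hv : Antivary (A q) x := fun a b hab => hcond q b a hab
        have h1 : ∑ s, A q s * x s ≤ ∑ s, A q (φ s) * x s :=
          hv.sum_mul_le_sum_comp_perm_mul (σ := φ)
        have h2 : B.mulVec x q = ∑ s, A q (φ s) * x s := by
          rw [mulVec_apply']
          exact Finset.sum_congr rfl fun s _ => by rw [hφ s]
        have h3 : ρ * x q = ∑ s, A q s * x s := by
          have := congrFun heig q
          rw [mulVec_apply'] at this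
          simp only [Pi.smul_apply, smul_eq_mul] at this
          linarith [this]
        rw [h2, h3]
        exact h1
      obtain ⟨t, htρ, u, hu0, hueq⟩ := nonneg_eig hn B hBnn ρ hρ0 x hxpos hBge
      calc ρ ≤ t := htρ
        _ ≤ perronRoot B := le_csSup (pr_bddAbove B hBnn) ⟨le_trans hρ0 htρ, u, hu0, hueq⟩
    have hbdd : BddBelow (perronRoot '' Omega A) := by
      refine ⟨0, ?_⟩
      rintro r ⟨B, -, rfl⟩
      exact pr_nonneg B
    constructor
    · -- forward direction, by contraposition
      intro heq
      by_contra hcond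
      push_neg at hcond
      obtain ⟨i, j, k, hxjk, hAjk⟩ := hcond
      have hjk : j ≠ k := fun h => by rw [h] at hxjk; exact lt_irrefl _ hxjk
      -- ρ > 0
      have hρpos : 0 < ρ := by
        obtain ⟨m, hm, hmpos⟩ := hirr i i
        have h2 : (A ^ m).mulVec x = ρ ^ m • x := pow_mulVec_eig A x ρ heig m
        have h3 : (A ^ m).mulVec x i ≥ (A ^ m) i i * x i := by
          rw [mulVec_apply']
          have : ∀ s ∈ (univ : Finset (Fin n)), s ∉ ({i} : Finset (Fin n)) →
              (0:ℝ) ≤ (A ^ m) i s * x s := fun s _ _ =>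
            mul_nonneg (pow_entry_nonneg A hA m i s) (hxpos s).le
          calc (A ^ m) i i * x i = ∑ s ∈ ({i} : Finset (Fin n)), (A ^ m) i s * x s := by simp
            _ ≤ ∑ s, (A ^ m) i s * x s := Finset.sum_le_sum_of_subset_of_nonneg
                (subset_univ _) this
        have h4 : 0 < ρ ^ m * x i := by
          have h5 := congrFun h2 i
          simp only [Pi.smul_apply, smul_eq_mul] at h5
          have h6 : 0 < (A ^ m) i i * x i := mul_pos hmpos (hxpos i)
          linarith [h3, h5]
        have h7 : 0 < ρ ^ m := by
          by_contra hcon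
          push_neg at hcon
          nlinarith [hxpos i, h4]
        rcases lt_or_eq_of_le hρ0 with h | h
        · exact h
        · exfalso
          rw [← h, zero_pow (by omega)] at h7
          exact lt_irrefl _ h7
      -- build B by swapping entries j and k in row i
      set B : Matrix (Fin n) (Fin n) ℝ :=
        Matrix.of fun p q => if p = i then A i (Equiv.swap j k q) else A p q with hB
      have hBapp : ∀ p q, B p q = if p = i then A i (Equiv.swap j k q) else A p q :=
        fun p q => rfl
      have hBom : B ∈ Omega A := by
        intro p
        by_cases hp : p = i
        · subst hp
          exact ⟨Equiv.swap j k, fun q => by rw [hBapp, if_pos rfl]⟩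
        · exact ⟨Equiv.refl _, fun q => by rw [hBapp, if_neg hp]; rfl⟩
      have hBnn : ∀ p q, 0 ≤ B p q := by
        intro p q
        rw [hBapp]
        split
        · exact hA i _
        · exact hA p q
      have hrow : ∀ p, p ≠ i → ∀ q, B p q = A p q := by
        intro p hp q
        rw [hBapp, if_neg hp]
      have hAx : ∀ q, A.mulVec x q = ρ * x q := by
        intro q
        have := congrFun heig q
        simp only [Pi.smul_apply, smul_eq_mul] at this
        exact this
      -- value of row i of B applied to x
      have hBi_eq : B.mulVec x i = ρ * x i +
          (A i j * (x k - x j) + A i k * (x j - x k)) := by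
        rw [mulVec_apply']
        have h1 : ∀ q, B i q = A i (Equiv.swap j k q) := fun q => by
          rw [hBapp, if_pos rfl]
        have h2 : ∑ q, B i q * x q = ∑ q, A i (Equiv.swap j k q) * x q :=
          Finset.sum_congr rfl fun q _ => by rw [h1]
        have h3 : ∑ q, A i (Equiv.swap j k q) * x q = ∑ q, A i q * x (Equiv.swap j k q) := by
          have := Equiv.sum_comp (Equiv.swap j k) (fun q => A i q * x (Equiv.swap j k q))
          rw [← this]
          apply Finset.sum_congr rfl
          intro q _
          rw [Equiv.swap_apply_self]
        have h4 : ∑ q, A i q * x (Equiv.swap j k q) - ∑ q, A i q * x q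
            = A i j * (x k - x j) + A i k * (x j - x k) := by
          rw [← Finset.sum_sub_distrib]
          have h5 : ∀ q, A i q * x (Equiv.swap j k q) - A i q * x q
              = A i q * (x (Equiv.swap j k q) - x q) := fun q => by ring
          have h6 : ∑ q, (A i q * (x (Equiv.swap j k q) - x q))
              = ∑ q ∈ ({j, k} : Finset (Fin n)), A i q * (x (Equiv.swap j k q) - x q) := by
            symm
            apply Finset.sum_subset (subset_univ _)
            intro q _ hq
            simp only [Finset.mem_insert, Finset.mem_singleton, not_or] at hq
            rw [Equiv.swap_apply_of_ne_of_ne hq.1 hq.2]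
            ring
          calc ∑ q, (A i q * x (Equiv.swap j k q) - A i q * x q)
              = ∑ q, A i q * (x (Equiv.swap j k q) - x q) :=
                Finset.sum_congr rfl fun q _ => h5 q
            _ = ∑ q ∈ ({j, k} : Finset (Fin n)), A i q * (x (Equiv.swap j k q) - x q) := h6
            _ = A i j * (x (Equiv.swap j k j) - x j) + A i k * (x (Equiv.swap j k k) - x k) :=
                Finset.sum_pair hjk
            _ = A i j * (x k - x j) + A i k * (x j - x k) := by
                rw [Equiv.swap_apply_left, Equiv.swap_apply_right]
        have h7 : ∑ q, A i q * x q = ρ * x i := by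
          rw [← mulVec_apply', hAx]
        rw [h2, h3]
        linarith [h4, h7]
      have hBle : ∀ q, B.mulVec x q ≤ ρ * x q := by
        intro q
        by_cases hq : q = i
        · subst hq
          rw [hBi_eq]
          nlinarith [hxjk, hAjk]
        · have : B.mulVec x q = A.mulVec x q := by
            rw [mulVec_apply', mulVec_apply']
            exact Finset.sum_congr rfl fun s _ => by rw [hrow q hq]
          rw [this, hAx]
      have hBi : B.mulVec x i < ρ * x i := by
        rw [hBi_eq]
        nlinarith [hxjk, hAjk]
      obtain ⟨M, hM, δ, hδ, hdef⟩ := deficiency A B hA hBnn hirr x hxpos ρ hρpos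
        heig i hrow hBle hBi
      obtain ⟨c, hc0, hcρ, hc⟩ := eig_le_of_deficiency B hBnn x hxpos ρ hρpos M hM δ hδ hdef
      have hprB : perronRoot B ≤ c := by
        apply Real.sSup_le _ hc0
        rintro r ⟨hr, v, hv, he⟩
        exact hc r v hr hv he
      have hinf : sInf (perronRoot '' Omega A) ≤ c :=
        le_trans (csInf_le hbdd ⟨B, hBom, rfl⟩) hprB
      rw [← heq] at hinf
      linarith
    · -- backward direction
      intro hcond
      apply le_antisymm
      · refine le_csInf ⟨perronRoot A, A, hAomega, rfl⟩ ?_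
        rintro r ⟨B, hBom, rfl⟩
        exact hlower hcond B hBom
      · exact csInf_le hbdd ⟨A, hAomega, rfl⟩
end
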